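/- arXiv:2103.16904 — 2 statements merged into one kernel-verified Lean document; each statement's English description precedes it below -/
import Mathlib

section
/- Let F be an algebraically closed field and let (f, g) be a pair of homogeneous polynomials of degree d ≥ 2 over F defining a separable simple morphism (f : g) : P^1 → P^1, with double point polynomial Δ. Then for every point ((a_0 : a_1), (b_0 : b_1)) of P^1(F) × P^1(F) with Δ(a_0, a_1, b_0, b_1) = 0, either the binary form Δ(a_0, a_1, Y_0, Y_1) in (Y_0, Y_1) has (b_0 : b_1) as a zero of multiplicity exactly 1, or the binary form Δ(X_0, X_1, b_0, b_1) in (X_0, X_1) has (a_0 : a_1) as a zero of multiplicity exactly 1; in particular the zero locus of Δ in P^1 × P^1 is a nonsingular curve. -/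
open MvPolynomial

noncomputable section

def wronskian2 (K : Type) [Field K] (f g : MvPolynomial (Fin 2) K) : MvPolynomial (Fin 2) K :=
  pderiv 0 f * pderiv 1 g - pderiv 1 f * pderiv 0 g

def linForm (K : Type) [Field K] (c d : K) : MvPolynomial (Fin 2) K :=
  C d * X 0 - C c * X 1

/-- Simplicity over an algebraically closed field `K` (so that `K̄ = K`). -/
def IsSimplePair' (K : Type) [Field K] (f g : MvPolynomial (Fin 2) K) : Prop :=
  ∀ a b : K, (a, b) ≠ (0, 0) →
    (∀ c d : K, (c, d) ≠ (0, 0) → ¬ (linForm K c d) ^ 3 ∣ (C b * f - C a * g)) ∧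
    (∀ c d c' d' : K, (c, d) ≠ (0, 0) → (c', d') ≠ (0, 0) →
      (linForm K c d) ^ 2 ∣ (C b * f - C a * g) →
      (linForm K c' d') ^ 2 ∣ (C b * f - C a * g) → c * d' = c' * d)

/-!
Specialising the defining identity of `Δ` at `x = a` gives
`ℓ_a · Δ(a, Y) = g(a) f(Y) - f(a) g(Y)`, the binary form whose zeros are the fibre of `(f : g)`
through `a`; similarly at `y = b`. Since `Δ(a, b) = 0`, the linear form `ℓ_b` divides `Δ(a, ·)`.
If `ℓ_b²` does not divide the fibre form through `a`, that zero is simple. Otherwise, when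
`a = b` in `P¹`, a double zero of `Δ(a, ·)` at `a` would be a triple zero of the fibre form; when
`a ≠ b`, the point `b` lies in the fibre through `a`, so both fibre forms agree up to a scalar, and
a double zero of `Δ(·, b)` at `a` would give that fibre two double points. Both contradict
simplicity.
-/

section
attribute [local instance] MvPolynomial.gradedAlgebra
variable {σ R : Type*} [CommRing R] {p q : MvPolynomial σ R} {m n : ℕ}

theorem MvPolynomial.IsHomogeneous.homogeneousComponent_add_mul (hp : p.IsHomogeneous m)
    (n : ℕ) (q : MvPolynomial σ R) :
    homogeneousComponent (m + n) (p * q) = p * homogeneousComponent n q := by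
  rw [← decomposition.decompose'_apply, ← decomposition.decompose'_apply]
  exact DirectSum.coe_decompose_mul_add_of_left_mem (homogeneousSubmodule σ R) hp

theorem MvPolynomial.IsHomogeneous.of_mul_left [IsDomain R] (hp : p.IsHomogeneous m) (hp0 : p ≠ 0)
    (hpq : (p * q).IsHomogeneous (m + n)) : q.IsHomogeneous n := by
  intro e he
  suffices e.degree = n by rw [Finsupp.degree_eq_weight_one] at this; exact this
  by_contra hne
  have hcomp : homogeneousComponent e.degree q = 0 := by
    have h := hp.homogeneousComponent_add_mul e.degree q
    rw [homogeneousComponent_of_mem ((mem_homogeneousSubmodule _ _).mpr hpq),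
      if_neg (by omega)] at h
    exact (mul_eq_zero.mp h.symm).resolve_left hp0
  exact he (by simpa [coeff_homogeneousComponent] using congrArg (coeff e) hcomp)
end

theorem X_zero_dvd_of_eval_eq_zero {R : Type*} [CommSemiring R] {p : MvPolynomial (Fin 2) R}
    {n : ℕ} (hp : p.IsHomogeneous n) (h0 : eval ![0, 1] p = 0) : X 0 ∣ p := by
  have hsingle : ∀ m ∈ p.support, m 0 = 0 → m = Finsupp.single 1 n := by
    intro m hm hm0
    have hdeg : m.degree = n := (hp.degree_eq_sum_deg_support hm).symm
    rw [Finsupp.degree_eq_sum, Fin.sum_univ_two] at hdeg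
    ext i
    fin_cases i <;> simp_all
  have heval : eval ![0, 1] p = coeff (Finsupp.single 1 n) p := by
    rw [eval_eq', Finset.sum_eq_single (Finsupp.single 1 n)]
    · simp [Fin.prod_univ_two]
    · intro m hm hmn
      have hm0 : m 0 ≠ 0 := fun hm0 => hmn (hsingle m hm hm0)
      simp [Fin.prod_univ_two, hm0]
    · intro hn
      rw [notMem_support_iff.mp hn, zero_mul]
  rw [p.as_sum]
  refine Finset.dvd_sum fun m hm => X_dvd_monomial.mpr (Or.inr fun hm0 => ?_)
  rw [heval, ← hsingle m hm hm0] at h0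
  exact mem_support_iff.mp hm h0

section

variable {F : Type} [Field F]

theorem isHomogeneous_linForm (c d : F) : (linForm F c d).IsHomogeneous 1 :=
  (isHomogeneous_C_mul_X d 0).sub (isHomogeneous_C_mul_X c 1)

theorem linForm_ne_zero {c d : F} (h : (c, d) ≠ (0, 0)) : linForm F c d ≠ 0 := by
  intro h0
  have h1 := congrArg (eval ![1, 0]) h0
  have h2 := congrArg (eval ![0, 1]) h0
  simp [linForm] at h1 h2
  simp_all

theorem eval_linForm_self (c d : F) : eval ![c, d] (linForm F c d) = 0 := by
  simp [linForm, mul_comm]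

theorem linForm_mul_mul (μ c d : F) : linForm F (μ * c) (μ * d) = C μ * linForm F c d := by
  simp only [linForm, C_mul]
  ring

theorem linForm_dvd_of_eval_eq_zero {h : MvPolynomial (Fin 2) F} {n : ℕ}
    (hh : h.IsHomogeneous n) {b₀ b₁ : F} (hb : (b₀, b₁) ≠ (0, 0))
    (h0 : eval ![b₀, b₁] h = 0) : linForm F b₀ b₁ ∣ h := by
  obtain ⟨α, γ, hdet⟩ : ∃ α γ : F, b₁ * α - b₀ * γ = 1 := by
    by_cases hb₁ : b₁ = 0
    · have hb₀ : b₀ ≠ 0 := fun hb₀ => hb (by rw [hb₀, hb₁])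
      exact ⟨0, -b₀⁻¹, by field_simp; ring⟩
    · exact ⟨b₁⁻¹, 0, by field_simp; ring⟩
  have hdetC : C b₁ * C α - C b₀ * C γ = (1 : MvPolynomial (Fin 2) F) := by
    rw [← C_mul, ← C_mul, ← C_sub, hdet, C_1]
  -- `φ` is a linear change of coordinates moving `linForm F b₀ b₁` to `X 0`, with inverse `ψ`.
  let φ : MvPolynomial (Fin 2) F →ₐ[F] MvPolynomial (Fin 2) F :=
    aeval ![C α * X 0 + C b₀ * X 1, C γ * X 0 + C b₁ * X 1]
  let ψ : MvPolynomial (Fin 2) F →ₐ[F] MvPolynomial (Fin 2) F :=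
    aeval ![linForm F b₀ b₁, C α * X 1 - C γ * X 0]
  have hψφ : ψ.comp φ = AlgHom.id F _ := by
    refine algHom_ext fun i => ?_
    fin_cases i
    · simp [φ, ψ, linForm]
      linear_combination (X 0 : MvPolynomial (Fin 2) F) * hdetC
    · simp [φ, ψ, linForm]
      linear_combination (X 1 : MvPolynomial (Fin 2) F) * hdetC
  have hφh : (φ h).IsHomogeneous n := by
    simpa using hh.aeval (n := 1) _ fun i => by
      fin_cases i
      · exact (isHomogeneous_C_mul_X α 0).add (isHomogeneous_C_mul_X b₀ 1)
      · exact (isHomogeneous_C_mul_X γ 0).add (isHomogeneous_C_mul_X b₁ 1)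
  have hφh0 : eval ![0, 1] (φ h) = 0 := by
    rw [aeval_def, algebraMap_eq, ← eval_assoc]
    convert h0 using 3
    funext i
    fin_cases i <;> simp
  calc linForm F b₀ b₁ = ψ (X 0) := by simp [ψ]
    _ ∣ ψ (φ h) := map_dvd ψ (X_zero_dvd_of_eval_eq_zero hφh hφh0)
    _ = h := by rw [← AlgHom.comp_apply, hψφ, AlgHom.id_apply]

theorem exists_eq_mul_of_mul_eq_mul {u v u' v' : F} (h : (u, v) ≠ (0, 0))
    (h' : (u', v') ≠ (0, 0)) (hcross : u * v' = u' * v) :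
    ∃ μ ≠ 0, u' = μ * u ∧ v' = μ * v := by
  by_cases hu : u = 0
  · have hv : v ≠ 0 := fun hv => h (by rw [hu, hv])
    have hu' : u' = 0 := by simpa [hu, hv] using hcross.symm
    have hv' : v' ≠ 0 := fun hv' => h' (by rw [hu', hv'])
    exact ⟨v' / v, div_ne_zero hv' hv, by simp [hu, hu'], by field_simp⟩
  · have hu' : u' ≠ 0 := by
      rintro rfl
      exact h' (by simp_all)
    refine ⟨u' / u, div_ne_zero hu' hu, by field_simp, ?_⟩
    field_simp
    linear_combination hcross

theorem aeval_C_C (a b : F) (p : MvPolynomial (Fin 2) F) :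
    aeval ![(C a : MvPolynomial (Fin 2) F), C b] p = C (eval ![a, b] p) := by
  have hC : ![(C a : MvPolynomial (Fin 2) F), C b] = C ∘ ![a, b] := by
    funext i
    fin_cases i <;> rfl
  rw [hC, aeval_C_comp_left, aeval_eq_eval]

/-- For `(u : v) = (f x : g x)` this is the form `C v * f - C u * g` of `IsSimplePair'`. -/
def fibreForm (f g : MvPolynomial (Fin 2) F) (x : Fin 2 → F) : MvPolynomial (Fin 2) F :=
  C (eval x g) * f - C (eval x f) * g

theorem isHomogeneous_fibreForm {f g : MvPolynomial (Fin 2) F} {d : ℕ} (hf : f.IsHomogeneous d)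
    (hg : g.IsHomogeneous d) (x : Fin 2 → F) : (fibreForm f g x).IsHomogeneous d :=
  (hf.C_mul _).sub (hg.C_mul _)

theorem fibreForm_eq_C_mul_of_eval_eq_zero {f g : MvPolynomial (Fin 2) F} {x y : Fin 2 → F}
    (hx : (eval x f, eval x g) ≠ (0, 0)) (hy : (eval y f, eval y g) ≠ (0, 0))
    (hxy : eval y (fibreForm f g x) = 0) :
    ∃ μ ≠ 0, fibreForm f g y = C μ * fibreForm f g x := by
  obtain ⟨μ, hμ, hfy, hgy⟩ := exists_eq_mul_of_mul_eq_mul hx hy (by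
    simp only [fibreForm, map_sub, map_mul, eval_C] at hxy
    linear_combination -hxy)
  refine ⟨μ, hμ, ?_⟩
  simp only [fibreForm, hfy, hgy, C_mul]
  ring

theorem aeval_X_X (p : MvPolynomial (Fin 2) F) : aeval ![X 0, X 1] p = p := by
  have hX : ![(X 0 : MvPolynomial (Fin 2) F), X 1] = X := by
    funext i
    fin_cases i <;> rfl
  rw [hX, aeval_X_left_apply]

theorem eval_aeval_left (Δ : MvPolynomial (Fin 4) F) (a₀ a₁ b₀ b₁ : F) :
    eval ![b₀, b₁] (aeval ![C a₀, C a₁, X 0, X 1] Δ) = eval ![a₀, a₁, b₀, b₁] Δ := by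
  rw [aeval_def, algebraMap_eq, ← eval_assoc]
  congr 2
  funext i
  fin_cases i <;> simp

theorem eval_aeval_right (Δ : MvPolynomial (Fin 4) F) (a₀ a₁ b₀ b₁ : F) :
    eval ![a₀, a₁] (aeval ![X 0, X 1, C b₀, C b₁] Δ) = eval ![a₀, a₁, b₀, b₁] Δ := by
  rw [aeval_def, algebraMap_eq, ← eval_assoc]
  congr 2
  funext i
  fin_cases i <;> simp

def IsDoublePointPolynomial (f g : MvPolynomial (Fin 2) F) (Δ : MvPolynomial (Fin 4) F) : Prop :=
  (X 0 * X 3 - X 1 * X 2) * Δ =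
    aeval ![X 0, X 1] f * aeval ![X 2, X 3] g - aeval ![X 2, X 3] f * aeval ![X 0, X 1] g

namespace IsDoublePointPolynomial

variable {f g : MvPolynomial (Fin 2) F} {Δ : MvPolynomial (Fin 4) F}

theorem mul_aeval (hΔ : IsDoublePointPolynomial f g Δ) (w : Fin 4 → MvPolynomial (Fin 2) F) :
    (w 0 * w 3 - w 1 * w 2) * aeval w Δ =
      aeval ![w 0, w 1] f * aeval ![w 2, w 3] g - aeval ![w 2, w 3] f * aeval ![w 0, w 1] g := by
  have hpair : ∀ i j : Fin 4,
      (fun k => aeval w ((![X i, X j] : Fin 2 → MvPolynomial (Fin 4) F) k)) = ![w i, w j] := by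
    intro i j
    funext k
    fin_cases k <;> simp
  have h := congrArg (aeval w) hΔ
  simpa only [map_mul, map_sub, aeval_X, comp_aeval_apply, hpair] using h

theorem linForm_mul_aeval_left (hΔ : IsDoublePointPolynomial f g Δ) (a₀ a₁ : F) :
    linForm F a₀ a₁ * aeval ![C a₀, C a₁, X 0, X 1] Δ = fibreForm f g ![a₀, a₁] := by
  have h := hΔ.mul_aeval ![C a₀, C a₁, X 0, X 1]
  simp only [Matrix.cons_val, aeval_C_C, aeval_X_X] at h
  rw [linForm, fibreForm]
  linear_combination -h

theorem linForm_mul_aeval_right (hΔ : IsDoublePointPolynomial f g Δ) (b₀ b₁ : F) :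
    linForm F b₀ b₁ * aeval ![X 0, X 1, C b₀, C b₁] Δ = fibreForm f g ![b₀, b₁] := by
  have h := hΔ.mul_aeval ![X 0, X 1, C b₀, C b₁]
  simp only [Matrix.cons_val, aeval_C_C, aeval_X_X] at h
  rw [linForm, fibreForm]
  linear_combination h

end IsDoublePointPolynomial

theorem linForm_dvd_of_linForm_mul_eq_fibreForm {f g : MvPolynomial (Fin 2) F} {d : ℕ}
    (hf : f.IsHomogeneous d) (hg : g.IsHomogeneous d) (hd : 1 ≤ d) {a₀ a₁ b₀ b₁ : F}
    (ha : (a₀, a₁) ≠ (0, 0)) (hb : (b₀, b₁) ≠ (0, 0)) {P : MvPolynomial (Fin 2) F}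
    (hP : linForm F a₀ a₁ * P = fibreForm f g ![a₀, a₁]) (hPb : eval ![b₀, b₁] P = 0) :
    linForm F b₀ b₁ ∣ P := by
  have hPd : P.IsHomogeneous (d - 1) := by
    refine (isHomogeneous_linForm a₀ a₁).of_mul_left (linForm_ne_zero ha) ?_
    rw [hP, Nat.add_sub_cancel' hd]
    exact isHomogeneous_fibreForm hf hg _
  exact linForm_dvd_of_eval_eq_zero hPd hb hPb

namespace IsSimplePair'

variable {f g : MvPolynomial (Fin 2) F} {a₀ a₁ b₀ b₁ : F}

theorem not_sq_dvd_of_proportional (hsimp : IsSimplePair' F f g)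
    (hfg : (eval ![a₀, a₁] f, eval ![a₀, a₁] g) ≠ (0, 0))
    (ha : (a₀, a₁) ≠ (0, 0)) (hb : (b₀, b₁) ≠ (0, 0)) (hab : a₀ * b₁ = b₀ * a₁)
    {P : MvPolynomial (Fin 2) F} (hP : linForm F a₀ a₁ * P = fibreForm f g ![a₀, a₁]) :
    ¬ linForm F b₀ b₁ ^ 2 ∣ P := by
  obtain ⟨μ, hμ, rfl, rfl⟩ := exists_eq_mul_of_mul_eq_mul ha hb hab
  rw [linForm_mul_mul, mul_pow, ← C_pow, ((pow_ne_zero 2 hμ).isUnit.map C).mul_left_dvd]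
  rintro ⟨q, rfl⟩
  refine (hsimp _ _ hfg).1 a₀ a₁ ha ⟨q, ?_⟩
  change fibreForm f g ![a₀, a₁] = _
  rw [← hP]
  ring

theorem not_sq_dvd_of_sq_dvd_fibreForm (hsimp : IsSimplePair' F f g)
    (hfa : (eval ![a₀, a₁] f, eval ![a₀, a₁] g) ≠ (0, 0))
    (hfb : (eval ![b₀, b₁] f, eval ![b₀, b₁] g) ≠ (0, 0))
    (ha : (a₀, a₁) ≠ (0, 0)) (hb : (b₀, b₁) ≠ (0, 0)) (hab : a₀ * b₁ ≠ b₀ * a₁)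
    (hsq : linForm F b₀ b₁ ^ 2 ∣ fibreForm f g ![a₀, a₁]) {Q : MvPolynomial (Fin 2) F}
    (hQ : linForm F b₀ b₁ * Q = fibreForm f g ![b₀, b₁]) :
    ¬ linForm F a₀ a₁ ^ 2 ∣ Q := by
  intro haQ
  obtain ⟨μ, hμ, hba⟩ := fibreForm_eq_C_mul_of_eval_eq_zero hfa hfb (by
    obtain ⟨q, hq⟩ := hsq
    simp [hq, eval_linForm_self])
  have haFa : linForm F a₀ a₁ ^ 2 ∣ fibreForm f g ![a₀, a₁] := by
    rw [← (hμ.isUnit.map C).dvd_mul_left, ← hba, ← hQ]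
    exact haQ.mul_left _
  exact hab ((hsimp _ _ hfa).2 a₀ a₁ b₀ b₁ ha hb haFa hsq)

end IsSimplePair'

end

theorem stmt4_general (F : Type) [Field F] (d : ℕ) (hd : 2 ≤ d)
    (f g : MvPolynomial (Fin 2) F)
    (hf : f.IsHomogeneous d) (hg : g.IsHomogeneous d)
    (hmor : ∀ a b : F, (a, b) ≠ (0, 0) → ¬ (eval ![a, b] f = 0 ∧ eval ![a, b] g = 0))
    (hsimp : IsSimplePair' F f g)
    (Δ : MvPolynomial (Fin 4) F)
    (hΔ : (X 0 * X 3 - X 1 * X 2) * Δ =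
      aeval ![X 0, X 1] f * aeval ![X 2, X 3] g - aeval ![X 2, X 3] f * aeval ![X 0, X 1] g) :
    ∀ a₀ a₁ b₀ b₁ : F, (a₀, a₁) ≠ (0, 0) → (b₀, b₁) ≠ (0, 0) →
      eval ![a₀, a₁, b₀, b₁] Δ = 0 →
      ((linForm F b₀ b₁ ∣ aeval ![C a₀, C a₁, X 0, X 1] Δ ∧
          ¬ (linForm F b₀ b₁) ^ 2 ∣ aeval ![C a₀, C a₁, X 0, X 1] Δ) ∨
       (linForm F a₀ a₁ ∣ aeval ![X 0, X 1, C b₀, C b₁] Δ ∧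
          ¬ (linForm F a₀ a₁) ^ 2 ∣ aeval ![X 0, X 1, C b₀, C b₁] Δ)) := by
  intro a₀ a₁ b₀ b₁ ha hb h0
  have hfg : ∀ {c₀ c₁ : F}, (c₀, c₁) ≠ (0, 0) →
      (eval ![c₀, c₁] f, eval ![c₀, c₁] g) ≠ (0, 0) :=
    fun hc h => hmor _ _ hc (Prod.mk.inj h)
  have hΔa := IsDoublePointPolynomial.linForm_mul_aeval_left hΔ a₀ a₁
  have hΔb := IsDoublePointPolynomial.linForm_mul_aeval_right hΔ b₀ b₁
  have hbΔa := linForm_dvd_of_linForm_mul_eq_fibreForm hf hg (by omega) ha hb hΔa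
    (by rwa [eval_aeval_left])
  have haΔb := linForm_dvd_of_linForm_mul_eq_fibreForm hf hg (by omega) hb ha hΔb
    (by rwa [eval_aeval_right])
  by_cases hsq : linForm F b₀ b₁ ^ 2 ∣ fibreForm f g ![a₀, a₁]
  · by_cases hab : a₀ * b₁ = b₀ * a₁
    · exact Or.inl ⟨hbΔa, hsimp.not_sq_dvd_of_proportional (hfg ha) ha hb hab hΔa⟩
    · exact Or.inr ⟨haΔb,
        hsimp.not_sq_dvd_of_sq_dvd_fibreForm (hfg ha) (hfg hb) ha hb hab hsq hΔb⟩
  · exact Or.inl ⟨hbΔa, fun h => hsq (hΔa ▸ h.mul_left _)⟩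

theorem stmt4 (F : Type) [Field F] [IsAlgClosed F] (d : ℕ) (hd : 2 ≤ d)
    (f g : MvPolynomial (Fin 2) F)
    (hf : f.IsHomogeneous d) (hg : g.IsHomogeneous d)
    (hmor : ∀ a b : F, (a, b) ≠ (0, 0) → ¬ (eval ![a, b] f = 0 ∧ eval ![a, b] g = 0))
    (hsep : wronskian2 F f g ≠ 0)
    (hsimp : IsSimplePair' F f g)
    (Δ : MvPolynomial (Fin 4) F)
    (hΔ : (X 0 * X 3 - X 1 * X 2) * Δ =
      aeval ![X 0, X 1] f * aeval ![X 2, X 3] g - aeval ![X 2, X 3] f * aeval ![X 0, X 1] g) :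
    ∀ a₀ a₁ b₀ b₁ : F, (a₀, a₁) ≠ (0, 0) → (b₀, b₁) ≠ (0, 0) →
      eval ![a₀, a₁, b₀, b₁] Δ = 0 →
      ((linForm F b₀ b₁ ∣ aeval ![C a₀, C a₁, X 0, X 1] Δ ∧
          ¬ (linForm F b₀ b₁) ^ 2 ∣ aeval ![C a₀, C a₁, X 0, X 1] Δ) ∨
       (linForm F a₀ a₁ ∣ aeval ![X 0, X 1, C b₀, C b₁] Δ ∧
          ¬ (linForm F a₀ a₁) ^ 2 ∣ aeval ![X 0, X 1, C b₀, C b₁] Δ)) :=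
  stmt4_general F d hd f g hf hg hmor hsimp Δ hΔ

end
end

section
/- Let F be a field and f, g ∈ F[x] univariate polynomials. Then there exists a unique polynomial Δ ∈ F[x, y] with (x − y)·Δ(x, y) = f(x)g(y) − f(y)g(x), and it satisfies Δ(x, x) = f′(x)g(x) − f(x)g′(x), where ′ denotes the formal derivative. -/
/-!
`f(x)g(y) - f(y)g(x) = (f(x) - f(y)) g(y) - f(y) (g(x) - g(y))`, and `x - y` divides both
differences, which gives `Δ`; it is unique since `x - y` is not a zero divisor. Differentiating
`(x - y) Δ = f(x)g(y) - f(y)g(x)` with respect to `y` and then setting `y = x` kills the term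
`(x - y) ∂Δ/∂y` and leaves `-Δ(x, x) = f(x)g'(x) - f'(x)g(x)`.
-/

open MvPolynomial

section Divisibility

variable {R A : Type*} [CommRing R] [CommRing A] [Algebra R A]

theorem sub_dvd_aeval_sub (a b : A) (p : Polynomial R) :
    a - b ∣ Polynomial.aeval a p - Polynomial.aeval b p := by
  simpa only [Polynomial.eval_map_algebraMap] using
    Polynomial.sub_dvd_eval_sub a b (p.map (algebraMap R A))

theorem sub_dvd_aeval_mul_aeval_sub_aeval_mul_aeval (a b : A) (f g : Polynomial R) :
    a - b ∣ Polynomial.aeval a f * Polynomial.aeval b g - Polynomial.aeval b f * Polynomial.aeval a g := by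
  have hsplit : Polynomial.aeval a f * Polynomial.aeval b g - Polynomial.aeval b f * Polynomial.aeval a g
      = (Polynomial.aeval a f - Polynomial.aeval b f) * Polynomial.aeval b g
        - Polynomial.aeval b f * (Polynomial.aeval a g - Polynomial.aeval b g) := by ring
  rw [hsplit]
  exact dvd_sub (dvd_mul_of_dvd_left (sub_dvd_aeval_sub a b f) _)
    (dvd_mul_of_dvd_right (sub_dvd_aeval_sub a b g) _)

end Divisibility

namespace MvPolynomial

variable {R : Type*} [CommRing R]

theorem X_sub_X_ne_zero [Nontrivial R] {σ : Type*} {i j : σ} (hij : i ≠ j) :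
    (X i - X j : MvPolynomial σ R) ≠ 0 :=
  sub_ne_zero.mpr fun h => hij (X_injective h)

theorem pderiv_aeval_X_self {σ : Type*} (i : σ) (p : Polynomial R) :
    pderiv i (Polynomial.aeval (X i : MvPolynomial σ R) p)
      = Polynomial.aeval (X i) (Polynomial.derivative p) := by
  rw [Derivation.map_aeval, pderiv_X_self, smul_eq_mul, mul_one]

theorem pderiv_aeval_X_of_ne {σ : Type*} {i j : σ} (h : j ≠ i) (p : Polynomial R) :
    pderiv i (Polynomial.aeval (X j : MvPolynomial σ R) p) = 0 := by
  rw [Derivation.map_aeval, pderiv_X_of_ne h, smul_zero]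

theorem aeval_diag_aeval_X (k : Fin 2) (p : Polynomial R) :
    aeval ![X 0, X 0] (Polynomial.aeval (X k : MvPolynomial (Fin 2) R) p)
      = Polynomial.aeval (X 0 : MvPolynomial (Fin 2) R) p := by
  rw [← Polynomial.aeval_algHom_apply, aeval_X]
  fin_cases k <;> rfl

theorem aeval_diag_of_X_sub_X_mul_eq {Δ P : MvPolynomial (Fin 2) R} (h : (X 0 - X 1) * Δ = P) :
    aeval ![X 0, X 0] Δ = -aeval ![(X 0 : MvPolynomial (Fin 2) R), X 0] (pderiv 1 P) := by
  have hderiv := congrArg (fun Q => aeval ![(X 0 : MvPolynomial (Fin 2) R), X 0] (pderiv 1 Q)) h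
  simp only [Derivation.leibniz, map_sub, pderiv_X_self, pderiv_X_of_ne (show (0 : Fin 2) ≠ 1 by decide),
    smul_eq_mul, map_add, map_mul, aeval_X, Matrix.cons_val_zero, Matrix.cons_val_one,
    sub_self, zero_mul, zero_sub, zero_add, mul_neg, mul_one] at hderiv
  rw [← hderiv, map_neg, neg_neg]

end MvPolynomial

theorem stmt5 (F : Type) [Field F] (f g : Polynomial F) :
    (∃! Δ : MvPolynomial (Fin 2) F,
      (X 0 - X 1) * Δ =
        Polynomial.aeval (X 0 : MvPolynomial (Fin 2) F) f * Polynomial.aeval (X 1 : MvPolynomial (Fin 2) F) g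
          - Polynomial.aeval (X 1 : MvPolynomial (Fin 2) F) f * Polynomial.aeval (X 0 : MvPolynomial (Fin 2) F) g) ∧
    ∀ Δ : MvPolynomial (Fin 2) F,
      (X 0 - X 1) * Δ =
        Polynomial.aeval (X 0 : MvPolynomial (Fin 2) F) f * Polynomial.aeval (X 1 : MvPolynomial (Fin 2) F) g
          - Polynomial.aeval (X 1 : MvPolynomial (Fin 2) F) f * Polynomial.aeval (X 0 : MvPolynomial (Fin 2) F) g →
      aeval ![X 0, X 0] Δ =
        Polynomial.aeval (X 0 : MvPolynomial (Fin 2) F)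
          (Polynomial.derivative f * g - f * Polynomial.derivative g) := by
  refine ⟨?_, fun Δ hΔ => ?_⟩
  · obtain ⟨Δ, hΔ⟩ := sub_dvd_aeval_mul_aeval_sub_aeval_mul_aeval (R := F)
      (X 0 : MvPolynomial (Fin 2) F) (X 1) f g
    exact ⟨Δ, hΔ.symm, fun Δ' hΔ' =>
      mul_left_cancel₀ (X_sub_X_ne_zero (by decide : (0 : Fin 2) ≠ 1)) (hΔ'.trans hΔ)⟩
  · rw [aeval_diag_of_X_sub_X_mul_eq hΔ]
    simp only [Derivation.leibniz, map_sub, pderiv_aeval_X_self, smul_eq_mul, map_add, map_mul,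
      pderiv_aeval_X_of_ne (show (0 : Fin 2) ≠ 1 by decide), aeval_diag_aeval_X, mul_zero, map_zero]
    ring
end
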